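/- For each N ≥ 2, let P = {(x,0) : x ∈ ℝ} and Q = {(x, x/√(N−1)) : x ∈ ℝ} be lines in ℝ², and let T = (1/2)I + (1/2)R_{γA}R_{γB} be the Douglas–Rachford operator with A = N_Q and B = N_P the normal cone operators and any γ > 0. Then T equals the linear map √((N−1)/N) · (rotation by angle θ), where θ = arcsin(1/√N). -/

import Mathlib

/-- The planar rotation by angle `θ` on `EuclideanSpace ℝ (Fin 2)`. -/
noncomputable def rot2 (θ : ℝ) (x : EuclideanSpace ℝ (Fin 2)) : EuclideanSpace ℝ (Fin 2) :=
  (WithLp.equiv 2 (Fin 2 → ℝ)).symm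
    ![Real.cos θ * x 0 - Real.sin θ * x 1, Real.sin θ * x 0 + Real.cos θ * x 1]

/-!
For subspaces `K`, `L` with reflections `R_K = 2 P_K - I`, `R_L = 2 P_L - I`, expanding gives
`(I + R_K R_L) / 2 = P_K P_L + P_{K⊥} P_{L⊥}`. When `L` is the horizontal axis and `K` the line
at angle `θ` in the plane, this operator is `cos θ` times the rotation by `θ`. The line `Q` is
spanned by `(√(N-1), 1)`, of norm `√N`, so it is the line at angle `θ = arcsin (1/√N)`, and
`cos θ = √((N-1)/N)`.
-/

open Real

theorem douglasRachford_eq_starProjection_comp_add_orthogonal {E : Type*} [NormedAddCommGroup E]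
    [InnerProductSpace ℝ E] (K L : Submodule ℝ E) [K.HasOrthogonalProjection]
    [L.HasOrthogonalProjection] (x : E) :
    (1 / 2 : ℝ) • x + (1 / 2 : ℝ) • ((2 : ℝ) • K.starProjection ((2 : ℝ) • L.starProjection x - x)
        - ((2 : ℝ) • L.starProjection x - x)) =
      K.starProjection (L.starProjection x) + Kᗮ.starProjection (Lᗮ.starProjection x) := by
  simp only [K.starProjection_orthogonal, L.starProjection_orthogonal,
    sub_apply, ContinuousLinearMap.id_apply, map_sub, map_smul]
  module

noncomputable def unitVec (φ : ℝ) : EuclideanSpace ℝ (Fin 2) := !₂[cos φ, sin φ]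

theorem unitVec_zero : unitVec 0 = !₂[1, 0] := by
  simp [unitVec]

theorem norm_unitVec (φ : ℝ) : ‖unitVec φ‖ = 1 := by
  rw [EuclideanSpace.norm_eq, Fin.sum_univ_two]
  simp [unitVec]

theorem starProjection_span_unitVec (φ : ℝ) (x : EuclideanSpace ℝ (Fin 2)) :
    (ℝ ∙ unitVec φ).starProjection x = (cos φ * x 0 + sin φ * x 1) • unitVec φ := by
  rw [Submodule.starProjection_unit_singleton ℝ (norm_unitVec φ)]
  simp [unitVec, PiLp.inner_apply, Fin.sum_univ_two, mul_comm]

theorem starProjection_comp_add_orthogonal_span_unitVec (θ : ℝ) (x : EuclideanSpace ℝ (Fin 2)) :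
    (ℝ ∙ unitVec θ).starProjection ((ℝ ∙ unitVec 0).starProjection x) +
      (ℝ ∙ unitVec θ)ᗮ.starProjection ((ℝ ∙ unitVec 0)ᗮ.starProjection x) = cos θ • rot2 θ x := by
  simp only [Submodule.starProjection_orthogonal, sub_apply,
    ContinuousLinearMap.id_apply, starProjection_span_unitVec]
  ext i
  fin_cases i <;>
    simp only [unitVec, rot2, cos_zero, sin_zero, WithLp.equiv_symm_apply, PiLp.add_apply,
      PiLp.sub_apply, PiLp.smul_apply, smul_eq_mul, Fin.zero_eta, Fin.mk_one, Fin.isValue,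
      Matrix.cons_val_zero, Matrix.cons_val_one, Matrix.cons_val_fin_one]
  · ring
  · linear_combination -x 1 * sin_sq_add_cos_sq θ

theorem cos_arcsin_inv_sqrt {a : ℝ} (ha : 0 < a) : cos (arcsin (1 / √a)) = √((a - 1) / a) := by
  rw [cos_arcsin, div_pow, one_pow, sq_sqrt ha.le, one_sub_div ha.ne']

theorem unitVec_arcsin_inv_sqrt {a : ℝ} (ha : 1 < a) :
    unitVec (arcsin (1 / √a)) = (√(a - 1) / √a) • !₂[1, 1 / √(a - 1)] := by
  have ha₀ : 0 < a := zero_lt_one.trans ha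
  have hsin : sin (arcsin (1 / √a)) = 1 / √a := by
    have : 0 ≤ 1 / √a := by positivity
    exact sin_arcsin (by linarith) (by rw [div_le_one (by positivity)]; exact one_le_sqrt.2 ha.le)
  have hcos : cos (arcsin (1 / √a)) = √(a - 1) / √a := by
    rw [cos_arcsin_inv_sqrt ha₀, sqrt_div' _ ha₀.le]
  have : √(a - 1) ≠ 0 := (sqrt_pos.2 (sub_pos.2 ha)).ne'
  rw [unitVec, hsin, hcos]
  ext i
  fin_cases i
  · simp
  · simp only [Fin.mk_one, Fin.isValue, Matrix.cons_val_one, Matrix.cons_val_fin_one,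
      PiLp.smul_apply, smul_eq_mul]
    field_simp

theorem stmt2 (N : ℕ) (hN : 2 ≤ N)
    (P Q : Submodule ℝ (EuclideanSpace ℝ (Fin 2)))
    (hP : P = Submodule.span ℝ {(WithLp.equiv 2 (Fin 2 → ℝ)).symm ![1, 0]})
    (hQ : Q = Submodule.span ℝ
      {(WithLp.equiv 2 (Fin 2 → ℝ)).symm ![1, 1 / Real.sqrt ((N : ℝ) - 1)]})
    (RA RB T : EuclideanSpace ℝ (Fin 2) → EuclideanSpace ℝ (Fin 2))
    (hRA : ∀ x, RA x = (2 : ℝ) • (Q.orthogonalProjectionOnto x : EuclideanSpace ℝ (Fin 2)) - x)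
    (hRB : ∀ x, RB x = (2 : ℝ) • (P.orthogonalProjectionOnto x : EuclideanSpace ℝ (Fin 2)) - x)
    (hT : ∀ x, T x = (1/2 : ℝ) • x + (1/2 : ℝ) • RA (RB x)) :
    ∀ x, T x = Real.sqrt (((N : ℝ) - 1) / N) • rot2 (Real.arcsin (1 / Real.sqrt N)) x := by
  intro x
  have hN' : (1 : ℝ) < N := by exact_mod_cast hN
  have hP' : P = ℝ ∙ unitVec 0 := by
    rw [hP, unitVec_zero]
    rfl
  have hQ' : Q = ℝ ∙ unitVec (arcsin (1 / √N)) := by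
    have : √((N : ℝ) - 1) / √N ≠ 0 := by have := sqrt_pos.2 (sub_pos.2 hN'); positivity
    rw [hQ, unitVec_arcsin_inv_sqrt hN', Submodule.span_singleton_smul_eq this.isUnit]
    rfl
  subst hP' hQ'
  rw [hT, hRB, hRA, Submodule.coe_orthogonalProjectionOnto_apply,
    Submodule.coe_orthogonalProjectionOnto_apply, douglasRachford_eq_starProjection_comp_add_orthogonal,
    starProjection_comp_add_orthogonal_span_unitVec, cos_arcsin_inv_sqrt (by linarith)]
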